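/- Let (X,σ) be a shift space whose language admits a decomposition 𝓛 = 𝓒^p 𝓖 𝓒^s satisfying Conditions (I) and (III). Then either h_top(X,σ) > 0, or X consists of a single periodic orbit. -/

import Mathlib

open MeasureTheory Filter Topology
open scoped ENNReal

/-- The full two-sided shift on `p` symbols. -/
abbrev FullShift (p : ℕ) : Type := ℤ → Fin p

/-- The left shift map. -/
def shiftMap {p : ℕ} : FullShift p → FullShift p := fun x n => x (n + 1)

/-- A (two-sided) shift space: a nonempty closed shift-invariant subset of the full shift. -/
def IsShiftSpace {p : ℕ} (X : Set (FullShift p)) : Prop :=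
  X.Nonempty ∧ IsClosed X ∧ shiftMap '' X = X

/-- `x` spells the word `w` starting at position `k`. -/
def spellsAt {p : ℕ} (x : FullShift p) (k : ℤ) (w : List (Fin p)) : Prop :=
  ∀ i : Fin w.length, x (k + (i : ℕ)) = w.get i

/-- The language of a shift space: all finite words occurring in its sequences. -/
def language {p : ℕ} (X : Set (FullShift p)) : Set (List (Fin p)) :=
  {w | ∃ x ∈ X, ∃ k : ℤ, spellsAt x k w}

/-- Words of length `n` in a collection `D`. -/
def wordsOfLen {p : ℕ} (D : Set (List (Fin p))) (n : ℕ) : Set (List (Fin p)) :=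
  {w ∈ D | w.length = n}

/-- Exponential growth rate `h(D) = limsup (1/n) log #D_n` of a collection of words. -/
noncomputable def growth {p : ℕ} (D : Set (List (Fin p))) : ℝ :=
  Filter.atTop.limsup fun n : ℕ => Real.log ((wordsOfLen D n).ncard) / n

/-- Topological entropy of a shift space (= the growth rate of its language). -/
noncomputable def htop {p : ℕ} (X : Set (FullShift p)) : ℝ := growth (language X)

/-- `glueWords m w v = w 0 ++ v 0 ++ w 1 ++ v 1 ++ ⋯ ++ v (m-1) ++ w m`. -/
def glueWords {p : ℕ} : ℕ → (ℕ → List (Fin p)) → (ℕ → List (Fin p)) → List (Fin p)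
  | 0, w, _ => w 0
  | (m + 1), w, v => glueWords m w v ++ v m ++ w (m + 1)

/-- (S)-specification on `G ⊆ L` with gap size `t`. -/
def HasSpecS {p : ℕ} (L G : Set (List (Fin p))) (t : ℕ) : Prop :=
  ∀ (m : ℕ) (w : ℕ → List (Fin p)), (∀ i ≤ m, w i ∈ G) →
    ∃ v : ℕ → List (Fin p), (∀ i < m, v i ∈ L ∧ (v i).length = t) ∧
      glueWords m w v ∈ L

/-- The central cylinder of a word `w`, starting at position `-⌊|w|/2⌋`. -/
def centralCylinder {p : ℕ} (w : List (Fin p)) : Set (FullShift p) :=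
  {x | spellsAt x (-((w.length / 2 : ℕ) : ℤ)) w}

/-- (Per)-specification on `G` with gap size `t`: the glued word can moreover be realized by
a periodic point of period exactly `|x| + t`. -/
def HasSpecPer {p : ℕ} (X : Set (FullShift p)) (G : Set (List (Fin p))) (t : ℕ) : Prop :=
  ∀ (m : ℕ) (w : ℕ → List (Fin p)), (∀ i ≤ m, w i ∈ G) →
    ∃ v : ℕ → List (Fin p), (∀ i < m, v i ∈ language X ∧ (v i).length = t) ∧
      glueWords m w v ∈ language X ∧
      ∃ z ∈ X, shiftMap^[(glueWords m w v).length + t] z = z ∧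
        z ∈ centralCylinder (glueWords m w v)

/-- A decomposition `L = 𝓒ᵖ 𝓖 𝓒ˢ` of a language. -/
def Decomp {p : ℕ} (L Cp G Cs : Set (List (Fin p))) : Prop :=
  Cp ⊆ L ∧ G ⊆ L ∧ Cs ⊆ L ∧
    ∀ w ∈ L, ∃ u v x, u ∈ Cp ∧ v ∈ G ∧ x ∈ Cs ∧ w = u ++ v ++ x

/-- `𝓖(M)`: words of `L` decomposable with prefix and suffix of length at most `M`. -/
def GM {p : ℕ} (L Cp G Cs : Set (List (Fin p))) (M : ℕ) : Set (List (Fin p)) :=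
  {w ∈ L | ∃ u v x, u ∈ Cp ∧ v ∈ G ∧ x ∈ Cs ∧ u.length ≤ M ∧ x.length ≤ M ∧ w = u ++ v ++ x}

/-- Condition (III): uniformly controlled extension of words of `𝓖(M)` to words of `𝓖`. -/
def CondIII {p : ℕ} (L Cp G Cs : Set (List (Fin p))) : Prop :=
  ∀ M : ℕ, ∃ τ : ℕ, ∀ v ∈ GM L Cp G Cs M,
    ∃ u w : List (Fin p), u.length ≤ τ ∧ w.length ≤ τ ∧ u ++ v ++ w ∈ G

/-- Shift invariance of a measure. -/
def ShiftInvariant {p : ℕ} (μ : Measure (FullShift p)) : Prop :=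
  Measure.map shiftMap μ = μ

/-- Measure-theoretic (Kolmogorov–Sinai) entropy of a shift-invariant measure, computed via
the generating partitions into cylinders of length `n`. -/
noncomputable def entropyOf {p : ℕ} (μ : Measure (FullShift p)) : ℝ :=
  Filter.atTop.liminf fun n : ℕ =>
    (∑ w : Fin n → Fin p,
      Real.negMulLog (μ {x : FullShift p | ∀ i : Fin n, x ((i : ℕ) : ℤ) = w i}).toReal) / n

/-- `μ` is a measure of maximal entropy for the shift space `X`. -/
def IsMME {p : ℕ} (X : Set (FullShift p)) (μ : Measure (FullShift p)) : Prop :=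
  IsProbabilityMeasure μ ∧ ShiftInvariant μ ∧ μ X = 1 ∧ entropyOf μ = htop X

/-- A shift space is intrinsically ergodic if it has exactly one measure of maximal entropy. -/
def IntrinsicallyErgodic {p : ℕ} (X : Set (FullShift p)) : Prop :=
  ∃! μ : Measure (FullShift p), IsMME X μ

/-- The set of points of `X` periodic of period at most `n`. -/
def PerN {p : ℕ} (X : Set (FullShift p)) (n : ℕ) : Set (FullShift p) :=
  {x ∈ X | ∃ k, 1 ≤ k ∧ k ≤ n ∧ shiftMap^[k] x = x}

/-- The measure evenly distributed on the periodic points of period at most `n`. -/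
noncomputable def perMeasure {p : ℕ} (X : Set (FullShift p)) (n : ℕ) :
    Measure (FullShift p) :=
  (((PerN X n).ncard : ℝ≥0∞))⁻¹ •
    Measure.sum (fun x : (PerN X n) => Measure.dirac (x : FullShift p))

/-- Weak* convergence of a sequence of measures. -/
def WeakStarLimit {p : ℕ} (μs : ℕ → Measure (FullShift p)) (μ : Measure (FullShift p)) : Prop :=
  ∀ f : C(FullShift p, ℝ),
    Tendsto (fun n => ∫ x, f x ∂(μs n)) atTop (𝓝 (∫ x, f x ∂μ))

/-- `Y` is a subshift factor of `X`. -/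
def IsSubshiftFactor {p q : ℕ} (X : Set (FullShift p)) (Y : Set (FullShift q)) : Prop :=
  IsShiftSpace Y ∧ ∃ π : FullShift p → FullShift q,
    Continuous π ∧ π '' X = Y ∧ ∀ x ∈ X, π (shiftMap x) = shiftMap (π x)

/-!
Suppose the entropy vanishes and fix `g, h ∈ 𝓖`. Specification glues, for every `ε ∈ {0,1}^k`,
the blocks `g, (g,h) or (h,g), …` into a word of the language; all these words have the same
length, so zero entropy forces two of them to coincide, and at the first pair where the choices
differ this coincidence says that `h` has period `|g| + t`. By Condition (III) every word of the
language occurs inside a word of `𝓖`, hence every point of `X` has that period, and specification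
applied to the initial blocks of two points puts them on one orbit.
-/

def IsPeriodicWord {α : Type*} (q : ℕ) (w : List α) : Prop :=
  ∀ j, j + q < w.length → w[j + q]? = w[j]?

namespace IsPeriodicWord

variable {α : Type*} {q : ℕ} {w l : List α}

lemma zero (w : List α) : IsPeriodicWord 0 w := fun _ _ => rfl

lemma of_infix (hl : IsPeriodicWord q l) (hw : w <:+: l) : IsPeriodicWord q w := by
  obtain ⟨s, r, rfl⟩ := hw
  have hget : ∀ i < w.length, (s ++ w ++ r)[s.length + i]? = w[i]? := fun i hi => by
    rw [List.append_assoc, List.getElem?_append_right (by omega), Nat.add_sub_cancel_left,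
      List.getElem?_append_left hi]
  intro j hj
  have key := hl (s.length + j) (by simp; omega)
  rwa [Nat.add_assoc, hget _ hj, hget _ (by omega)] at key

end IsPeriodicWord

lemma isPeriodicWord_of_append_eq {α : Type*} {u w r r' : List α} (h : u ++ w ++ r = w ++ r') :
    IsPeriodicWord u.length w := by
  intro j hj
  have key := congrArg (·[u.length + j]?) h
  simp only [List.append_assoc, List.getElem?_append_right (Nat.le_add_right _ _),
    Nat.add_sub_cancel_left, List.getElem?_append_left (show j < w.length by omega)] at key
  rwa [Nat.add_comm, List.getElem?_append_left hj, eq_comm] at key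

lemma Function.Periodic.eq_of_forall_lt {α : Type*} {f g : ℤ → α} {q : ℕ} (hq : 0 < q)
    (hf : Function.Periodic f q) (hg : Function.Periodic g q) (h : ∀ i < q, f i = g i) :
    f = g := by
  have hmod : ∀ φ : ℤ → α, Function.Periodic φ q → ∀ n, φ n = φ (n % q).toNat := by
    intro φ hφ n
    rw [Int.toNat_of_nonneg (Int.emod_nonneg n (by omega))]
    simpa [Int.emod_def, mul_comm] using (hφ.sub_int_mul_eq (n / q)).symm
  funext n
  rw [hmod f hf, hmod g hg, h]
  have := Int.emod_lt_of_pos n (show (0 : ℤ) < q by omega)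
  omega

section Shift

variable {p : ℕ}

lemma shiftMap_iterate_apply (k : ℕ) (x : FullShift p) (n : ℤ) :
    (shiftMap^[k] x) n = x (n + k) := by
  induction k generalizing x with
  | zero => simp
  | succ k ih =>
    rw [Function.iterate_succ_apply, ih]
    simp only [shiftMap, Nat.cast_succ, add_assoc, add_comm (k : ℤ)]

def window (x : FullShift p) (k : ℤ) (n : ℕ) : List (Fin p) :=
  List.ofFn fun j : Fin n => x (k + j)

@[simp]
lemma length_window (x : FullShift p) (k : ℤ) (n : ℕ) : (window x k n).length = n :=
  List.length_ofFn

lemma getElem?_window (x : FullShift p) (k : ℤ) {n j : ℕ} (hj : j < n) :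
    (window x k n)[j]? = some (x (k + j)) := by
  simp [window, hj]

lemma window_mem_language {X : Set (FullShift p)} {x : FullShift p} (hx : x ∈ X) (k : ℤ)
    (n : ℕ) : window x k n ∈ language X :=
  ⟨x, hx, k, fun i => (List.get_ofFn _ i).symm⟩

lemma spellsAt.infix {z : FullShift p} {k : ℤ} {s w r : List (Fin p)}
    (h : spellsAt z k (s ++ w ++ r)) : spellsAt z (k + s.length) w := fun i => by
  have := h ⟨s.length + i, by simp; omega⟩
  simp only [List.get_eq_getElem, List.append_assoc] at this
  rw [List.getElem_append_right (by simp), List.getElem_append_left (by simp)] at this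
  simpa [add_assoc] using this

lemma spellsAt.window_apply {z x : FullShift p} {k m : ℤ} {n i : ℕ}
    (h : spellsAt z k (window x m n)) (hi : i < n) : z (k + i) = x (m + i) := by
  simpa [window] using h ⟨i, by simpa using hi⟩

end Shift

lemma Decomp.exists_infix_mem {p : ℕ} {L Cp G Cs : Set (List (Fin p))} (hdec : Decomp L Cp G Cs)
    (hIII : CondIII L Cp G Cs) {w : List (Fin p)} (hw : w ∈ L) : ∃ h ∈ G, w <:+: h := by
  obtain ⟨u, v, x, hu, hv, hx, rfl⟩ := hdec.2.2.2 w hw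
  obtain ⟨τ, hτ⟩ := hIII (max u.length x.length)
  obtain ⟨u', x', -, -, hG⟩ :=
    hτ _ ⟨hw, u, v, x, hu, hv, hx, le_max_left _ _, le_max_right _ _, rfl⟩
  exact ⟨_, hG, u', x', rfl⟩

section Glue

variable {p : ℕ}

lemma HasSpecS.exists_append_mem {L G : Set (List (Fin p))} {t : ℕ} (hspec : HasSpecS L G t)
    {u w : List (Fin p)} (hu : u ∈ G) (hw : w ∈ G) : ∃ v, v.length = t ∧ u ++ v ++ w ∈ L := by
  obtain ⟨v, hv, hmem⟩ := hspec 1 (fun i => if i = 0 then u else w) fun i _ => by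
    split_ifs <;> assumption
  exact ⟨v 0, (hv 0 one_pos).2, hmem⟩

lemma glueWords_prefix (w v : ℕ → List (Fin p)) {l m : ℕ} (hlm : l ≤ m) :
    glueWords l w v <+: glueWords m w v := by
  induction m, hlm using Nat.le_induction with
  | base => exact List.prefix_refl _
  | succ m _ ih => exact ih.trans (List.prefix_append_of_prefix (List.prefix_append _ _))

lemma length_glueWords_congr {w w' v v' : ℕ → List (Fin p)} {m : ℕ}
    (hw : ∀ i ≤ m, (w i).length = (w' i).length) (hv : ∀ i < m, (v i).length = (v' i).length) :
    (glueWords m w v).length = (glueWords m w' v').length := by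
  induction m with
  | zero => exact hw 0 le_rfl
  | succ m ih =>
    simp only [glueWords, List.length_append]
    rw [ih (fun i hi => hw i (by omega)) (fun i hi => hv i (by omega)), hv m (by omega),
      hw (m + 1) le_rfl]

/-- `g`, then for each `i` the pair `(h, g)` if `ε i` and `(g, h)` otherwise. The leading `g`
makes `glueWords (2 * i)` end exactly before pair `i`. -/
def pairBlocks {α : Type*} (g h : List α) (ε : ℕ → Bool) : ℕ → List α
  | 0 => g
  | l + 1 => if ε (l / 2) = (l % 2 == 0) then h else g

section PairBlocks

variable {α : Type*} {g h : List α} {ε ε' : ℕ → Bool}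

lemma pairBlocks_mem {G : Set (List α)} (hg : g ∈ G) (hh : h ∈ G) (ε : ℕ → Bool) (l : ℕ) :
    pairBlocks g h ε l ∈ G := by
  cases l with
  | zero => exact hg
  | succ l => simp only [pairBlocks]; split_ifs <;> assumption

@[simp]
lemma pairBlocks_two_mul_add_one (i : ℕ) :
    pairBlocks g h ε (2 * i + 1) = if ε i then h else g := by
  simp [pairBlocks]

@[simp]
lemma pairBlocks_two_mul_add_two (i : ℕ) :
    pairBlocks g h ε (2 * i + 2) = if ε i then g else h := by
  cases hε : ε i <;> simp [pairBlocks, Nat.add_mod, show (2 * i + 1) / 2 = i by omega, hε]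

lemma pairBlocks_congr {i l : ℕ} (hε : ∀ j < i, ε j = ε' j) (hl : l ≤ 2 * i) :
    pairBlocks g h ε l = pairBlocks g h ε' l := by
  cases l with
  | zero => rfl
  | succ l => simp only [pairBlocks, hε (l / 2) (by omega)]

end PairBlocks

end Glue

section PairGlue

variable {p : ℕ} {g h : List (Fin p)} {t : ℕ}

lemma glueWords_two_mul_add_two (w v : ℕ → List (Fin p)) (i : ℕ) :
    glueWords (2 * i + 2) w v =
      glueWords (2 * i) w v ++ v (2 * i) ++ (w (2 * i + 1) ++ v (2 * i + 1) ++ w (2 * i + 2)) := by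
  simp only [glueWords, List.append_assoc]

lemma length_glueWords_pairBlocks {ε : ℕ → Bool} {v : ℕ → List (Fin p)} {k : ℕ}
    (hv : ∀ j < 2 * k, (v j).length = t) :
    (glueWords (2 * k) (pairBlocks g h ε) v).length =
      g.length + k * (g.length + h.length + 2 * t) := by
  induction k with
  | zero => simp [glueWords, pairBlocks]
  | succ k ih =>
    rw [Nat.mul_succ, glueWords_two_mul_add_two]
    cases hε : ε k <;>
      simp [ih fun j hj => hv j (by omega), hv (2 * k) (by omega), hv (2 * k + 1) (by omega), hε] <;>
      ring

/-- At the first pair where `ε` and `ε'` differ, one glued word reads `g v h …` where the other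
reads `h …`. -/
lemma isPeriodicWord_of_glueWords_pairBlocks_eq {ε ε' : ℕ → Bool} {v v' : ℕ → List (Fin p)}
    {k i : ℕ} (hv : ∀ j < 2 * k, (v j).length = t) (hv' : ∀ j < 2 * k, (v' j).length = t)
    (heq : glueWords (2 * k) (pairBlocks g h ε) v = glueWords (2 * k) (pairBlocks g h ε') v')
    (hik : i < k) (hagree : ∀ j < i, ε j = ε' j) (hεi : ε i = false) (hε'i : ε' i = true) :
    IsPeriodicWord (g.length + t) h := by
  obtain ⟨r, hr⟩ := glueWords_prefix (pairBlocks g h ε) v (show 2 * i + 2 ≤ 2 * k by omega)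
  obtain ⟨r', hr'⟩ := glueWords_prefix (pairBlocks g h ε') v' (show 2 * i + 2 ≤ 2 * k by omega)
  have hlen : (glueWords (2 * i) (pairBlocks g h ε) v ++ v (2 * i)).length =
      (glueWords (2 * i) (pairBlocks g h ε') v' ++ v' (2 * i)).length := by
    simp only [List.length_append, hv (2 * i) (by omega), hv' (2 * i) (by omega)]
    exact congrArg (· + t) (length_glueWords_congr
      (fun l hl => by rw [pairBlocks_congr hagree hl])
      (fun l hl => by rw [hv l (by omega), hv' l (by omega)]))
  rw [← hr, ← hr', glueWords_two_mul_add_two, glueWords_two_mul_add_two] at heq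
  simp only [pairBlocks_two_mul_add_one, pairBlocks_two_mul_add_two, hεi, hε'i,
    Bool.false_eq_true, ↓reduceIte, List.append_assoc] at heq
  have htail := List.append_inj_right (by simpa only [List.append_assoc] using heq) hlen
  rw [← hv (2 * i + 1) (by omega), ← List.length_append]
  exact isPeriodicWord_of_append_eq (by simpa only [List.append_assoc] using htail)

end PairGlue

section Counting

variable {p : ℕ}

lemma eq_of_glueWords_pairBlocks_eq {g h : List (Fin p)} {t k : ℕ}
    (hnper : ¬ IsPeriodicWord (g.length + t) h) {ε ε' : ℕ → Bool} {v v' : ℕ → List (Fin p)}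
    (hv : ∀ j < 2 * k, (v j).length = t) (hv' : ∀ j < 2 * k, (v' j).length = t)
    (heq : glueWords (2 * k) (pairBlocks g h ε) v = glueWords (2 * k) (pairBlocks g h ε') v') :
    ∀ i < k, ε i = ε' i := by
  intro i
  induction i using Nat.strong_induction_on with
  | _ i ih =>
    intro hik
    have hagree : ∀ j < i, ε j = ε' j := fun j hj => ih j hj (hj.trans hik)
    cases hεi : ε i <;> cases hε'i : ε' i
    · rfl
    · exact (hnper (isPeriodicWord_of_glueWords_pairBlocks_eq hv hv' heq hik hagree hεi hε'i)).elim
    · exact (hnper (isPeriodicWord_of_glueWords_pairBlocks_eq hv' hv heq.symm hik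
        (fun j hj => (hagree j hj).symm) hε'i hεi)).elim
    · rfl

lemma wordsOfLen_finite (D : Set (List (Fin p))) (n : ℕ) : (wordsOfLen D n).Finite :=
  (List.finite_length_eq (Fin p) n).subset fun _ hw => hw.2

lemma ncard_wordsOfLen_le (D : Set (List (Fin p))) (n : ℕ) : (wordsOfLen D n).ncard ≤ p ^ n :=
  calc (wordsOfLen D n).ncard ≤ {w : List (Fin p) | w.length = n}.ncard :=
        Set.ncard_le_ncard (fun _ hw => hw.2) (List.finite_length_eq _ n)
    _ = Nat.card (List.Vector (Fin p) n) := (Nat.card_coe_set_eq _).symm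
    _ = p ^ n := by simp

lemma log_ncard_wordsOfLen_div_le (D : Set (List (Fin p))) (n : ℕ) :
    Real.log (wordsOfLen D n).ncard / n ≤ Real.log p := by
  rcases Nat.eq_zero_or_pos (wordsOfLen D n).ncard with h0 | h0
  · simp [h0, Real.log_natCast_nonneg]
  rcases Nat.eq_zero_or_pos n with rfl | hn
  · simp [Real.log_natCast_nonneg]
  rw [div_le_iff₀ (by positivity), mul_comm, ← Real.log_pow]
  exact Real.log_le_log (by positivity) (by exact_mod_cast ncard_wordsOfLen_le D n)

lemma le_growth_of_two_pow_le {D : Set (List (Fin p))} {c : ℕ}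
    (h : ∀ k, 1 ≤ k → ∃ n, k ≤ n ∧ n ≤ c * k ∧ 2 ^ k ≤ (wordsOfLen D n).ncard) :
    Real.log 2 / c ≤ growth D := by
  refine le_limsup_of_frequently_le (frequently_atTop.2 fun N => ?_)
    ⟨Real.log p, eventually_map.2 (Eventually.of_forall (log_ncard_wordsOfLen_div_le D))⟩
  obtain ⟨n, hkn, hnc, hcard⟩ := h (N + 1) (by omega)
  refine ⟨n, by omega, ?_⟩
  have hn : (0 : ℝ) < n := by exact_mod_cast (show 0 < n by omega)
  have hc : (0 : ℝ) < c := by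
    exact_mod_cast Nat.pos_of_ne_zero fun hc => by simp [hc] at hnc; omega
  calc Real.log 2 / c = (N + 1 : ℕ) * Real.log 2 / (c * (N + 1 : ℕ)) := by field_simp
    _ ≤ (N + 1 : ℕ) * Real.log 2 / n :=
        div_le_div_of_nonneg_left (by positivity) hn (by exact_mod_cast hnc)
    _ = Real.log ((2 ^ (N + 1) : ℕ) : ℝ) / n := by push_cast; rw [Real.log_pow]; push_cast; ring
    _ ≤ Real.log (wordsOfLen D n).ncard / n := by gcongr

lemma two_pow_le_ncard_wordsOfLen {L G : Set (List (Fin p))} {t : ℕ} (hspec : HasSpecS L G t)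
    {g h : List (Fin p)} (hg : g ∈ G) (hh : h ∈ G) (hnper : ¬ IsPeriodicWord (g.length + t) h)
    (k : ℕ) : 2 ^ k ≤ (wordsOfLen L (g.length + k * (g.length + h.length + 2 * t))).ncard := by
  choose v hv hmem using fun s : Finset ℕ =>
    hspec (2 * k) (pairBlocks g h fun i => decide (i ∈ s)) fun l _ => pairBlocks_mem hg hh _ l
  set W := fun s : Finset ℕ => glueWords (2 * k) (pairBlocks g h fun i => decide (i ∈ s)) (v s)
  have hinj : Set.InjOn W ((Finset.range k).powerset : Set (Finset ℕ)) := by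
    intro s hs s' hs' hW
    simp only [Finset.coe_powerset, Set.mem_preimage, Set.mem_powerset_iff,
      Finset.coe_subset] at hs hs'
    ext i
    by_cases hik : i < k
    · simpa using eq_of_glueWords_pairBlocks_eq hnper (fun j hj => (hv s j hj).2)
        (fun j hj => (hv s' j hj).2) hW i hik
    · exact iff_of_false (fun hi => hik (Finset.mem_range.1 (hs hi)))
        (fun hi => hik (Finset.mem_range.1 (hs' hi)))
  calc 2 ^ k = ((Finset.range k).powerset.image W).card := by
        rw [Finset.card_image_of_injOn hinj, Finset.card_powerset, Finset.card_range]
    _ = (((Finset.range k).powerset.image W : Finset _) : Set (List (Fin p))).ncard :=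
        (Set.ncard_coe_finset _).symm
    _ ≤ _ := Set.ncard_le_ncard ?_ (wordsOfLen_finite L _)
  intro w hw
  obtain ⟨s, -, rfl⟩ := Finset.mem_image.1 (Finset.mem_coe.1 hw)
  exact ⟨hmem s, length_glueWords_pairBlocks fun j hj => (hv s j hj).2⟩

end Counting

theorem HasSpecS.isPeriodicWord_of_growth_nonpos {p : ℕ} {L G : Set (List (Fin p))} {t : ℕ}
    (hspec : HasSpecS L G t) (hL : growth L ≤ 0) {g h : List (Fin p)} (hg : g ∈ G)
    (hh : h ∈ G) : IsPeriodicWord (g.length + t) h := by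
  by_contra hnper
  have hq : 0 < g.length + t :=
    Nat.pos_of_ne_zero fun hq => hnper (hq ▸ IsPeriodicWord.zero h)
  have hgrowth := le_growth_of_two_pow_le (D := L) (c := 2 * g.length + h.length + 2 * t)
    fun k hk => ⟨_, by nlinarith, by nlinarith, two_pow_le_ncard_wordsOfLen hspec hg hh hnper k⟩
  have hpos : (0 : ℝ) < Real.log 2 / (2 * g.length + h.length + 2 * t : ℕ) :=
    div_pos (Real.log_pos one_lt_two) (by exact_mod_cast (by omega))
  linarith

section Orbit

variable {p : ℕ} {X : Set (FullShift p)} {q : ℕ}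

lemma periodic_of_forall_isPeriodicWord (hL : ∀ w ∈ language X, IsPeriodicWord q w)
    {x : FullShift p} (hx : x ∈ X) : Function.Periodic x q := fun n => by
  have := hL _ (window_mem_language hx n (q + 1)) 0 (by simp)
  rwa [zero_add, getElem?_window x n (by omega), getElem?_window x n (by omega), Option.some_inj,
    Nat.cast_zero, add_zero] at this

/-- Gluing words of `G` around the first `q` letters of `x` and of `y` exhibits both inside one
`q`-periodic point `z`, which is thus a shift of `x` and of `y`. -/
lemma exists_shiftMap_iterate_eq {G : Set (List (Fin p))} {t : ℕ} (hq : 0 < q)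
    (hspec : HasSpecS (language X) G t) (hG : ∀ w ∈ language X, ∃ h ∈ G, w <:+: h)
    (hper : ∀ z ∈ X, Function.Periodic z q) {x y : FullShift p} (hx : x ∈ X) (hy : y ∈ X) :
    ∃ d : ℕ, shiftMap^[d] x = y := by
  obtain ⟨_, hh₁, s₁, r₁, rfl⟩ := hG _ (window_mem_language hx 0 q)
  obtain ⟨_, hh₂, s₂, r₂, rfl⟩ := hG _ (window_mem_language hy 0 q)
  obtain ⟨v, -, z, hz, k, hspell⟩ := hspec.exists_append_mem hh₁ hh₂
  have hx' : spellsAt z (k + s₁.length) (window x 0 q) :=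
    spellsAt.infix (r := r₁ ++ v ++ (s₂ ++ window y 0 q ++ r₂))
      (by simpa only [List.append_assoc] using hspell)
  have hy' : spellsAt z (k + (s₁ ++ window x 0 q ++ r₁ ++ v ++ s₂).length) (window y 0 q) :=
    spellsAt.infix (r := r₂) (by simpa only [List.append_assoc] using hspell)
  have hzx : (fun n => z (k + s₁.length + n)) = x :=
    ((hper z hz).const_add _).eq_of_forall_lt hq (hper x hx) fun i hi => by
      simpa using hx'.window_apply hi
  have hzy : (fun n => z (k + (s₁ ++ window x 0 q ++ r₁ ++ v ++ s₂).length + n)) = y :=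
    ((hper z hz).const_add _).eq_of_forall_lt hq (hper y hy) fun i hi => by
      simpa using hy'.window_apply hi
  refine ⟨q + r₁.length + v.length + s₂.length, funext fun n => ?_⟩
  rw [shiftMap_iterate_apply, ← hzx, ← hzy]
  simp only [List.length_append, length_window]
  push_cast
  ring_nf

end Orbit

/-- **Proposition 2.4.** If the language of a shift space admits a decomposition satisfying
Conditions (I) and (III), then either the shift space has positive topological entropy,
or it consists of a single periodic orbit. -/
theorem posent_or_single_periodic_orbit {p : ℕ} (X : Set (FullShift p))
    (hX : IsShiftSpace X) (Cp G Cs : Set (List (Fin p)))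
    (hdec : Decomp (language X) Cp G Cs)
    (hI : ∃ t : ℕ, HasSpecS (language X) G t)
    (hIII : CondIII (language X) Cp G Cs) :
    0 < htop X ∨
      ∃ x ∈ X, (∃ n : ℕ, 1 ≤ n ∧ shiftMap^[n] x = x) ∧
        X = Set.range fun k : ℕ => shiftMap^[k] x := by
  refine or_iff_not_imp_left.2 fun hpos => ?_
  obtain ⟨t, hspec⟩ := hI
  obtain ⟨x₀, hx₀⟩ := hX.1
  have hG : ∀ w ∈ language X, ∃ h ∈ G, w <:+: h := fun _ => hdec.exists_infix_mem hIII
  obtain ⟨g, hg, hg₁⟩ := hG _ (window_mem_language hx₀ 0 1)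
  have hq : 0 < g.length + t := Nat.add_pos_left (by simpa using hg₁.length_le : 1 ≤ g.length) t
  have hper : ∀ z ∈ X, Function.Periodic z (g.length + t : ℕ) :=
    fun z => periodic_of_forall_isPeriodicWord fun w hw => by
      obtain ⟨h, hh, hwh⟩ := hG w hw
      exact (hspec.isPeriodicWord_of_growth_nonpos (not_lt.1 hpos) hg hh).of_infix hwh
  refine ⟨x₀, hx₀, ⟨_, hq, funext fun n => ?_⟩, Set.Subset.antisymm
    (fun y hy => exists_shiftMap_iterate_eq hq hspec hG hper hx₀ hy) ?_⟩
  · rw [shiftMap_iterate_apply]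
    exact hper x₀ hx₀ n
  · rintro _ ⟨k, rfl⟩
    exact (hX.2.2 ▸ Set.mapsTo_image shiftMap X).iterate k hx₀
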